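/- arXiv:1906.07430 — 4 statements merged into one kernel-verified Lean document; each statement's English description precedes it below -/
import Mathlib

section
/- If an undirected binary phylogenetic network N with distinguished edge e_ρ and reticulation set R is orientable, then (N, e_ρ, R) has no reticulation cut. -/
open Classical

/-- Indegree of a vertex in a digraph given by a relation. -/
noncomputable def inDeg {W : Type} (D : W → W → Prop) (b : W) : ℕ :=
  Nat.card {a : W // D a b}

/-- Outdegree of a vertex in a digraph given by a relation. -/
noncomputable def outDeg {W : Type} (D : W → W → Prop) (a : W) : ℕ :=
  Nat.card {b : W // D a b}

/-- A digraph is acyclic if it has no directed cycle. -/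
def DigraphAcyclic {W : Type} (D : W → W → Prop) : Prop :=
  ∀ a : W, ¬ Relation.TransGen D a a

/-- `D` is an orientation of the undirected graph `H`: every arc of `D` lies on an
edge of `H`, and every edge of `H` is given exactly one direction. -/
def IsOrientationOf {W : Type} (H : SimpleGraph W) (D : W → W → Prop) : Prop :=
  (∀ a b, D a b → H.Adj a b) ∧ (∀ a b, H.Adj a b → (D a b ↔ ¬ D b a))

/-- The graph obtained from `G` by subdividing the edge `{u,v}` with a new vertex
(represented by `none`). -/
def subdivide {V : Type} (G : SimpleGraph V) (u v : V) : SimpleGraph (Option V) where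
  Adj a b := match a, b with
    | some a', some b' => G.Adj a' b' ∧ ¬ (s(a', b') = s(u, v))
    | some a', none => a' = u ∨ a' = v
    | none, some b' => b' = u ∨ b' = v
    | none, none => False
  symm := by
    constructor
    intro a b h
    match a, b with
    | some a', some b' =>
        exact ⟨h.1.symm, fun he => h.2 (by rwa [Sym2.eq_swap] at he)⟩
    | some a', none => exact h
    | none, some b' => exact h
  loopless := by
    constructor
    intro a h
    match a with
    | some a' => exact G.loopless.irrefl a' h.1
    | none => exact h

/-- An undirected binary phylogenetic network: a connected graph in which every
vertex has degree `1` (a leaf) or degree `3`. -/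
def IsUndirBinNet {V : Type} [Fintype V] (G : SimpleGraph V) [DecidableRel G.Adj] : Prop :=
  G.Connected ∧ ∀ w : V, G.degree w = 1 ∨ G.degree w = 3

/-- An orientation of the binary network `G` with root subdividing the edge `{u,v}`
and reticulation set `R`: an acyclic orientation of the subdivided graph in which
the root has indegree `0`, the vertices of `R` have indegree `2` and all other
vertices have indegree `1`. -/
def IsBinOrientation {V : Type} [Fintype V] (G : SimpleGraph V) (u v : V) (R : Set V)
    (D : Option V → Option V → Prop) : Prop :=
  IsOrientationOf (subdivide G u v) D ∧ DigraphAcyclic D ∧ inDeg D none = 0 ∧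
    ∀ w : V, (w ∈ R ↔ inDeg D (some w) = 2) ∧ (w ∉ R → inDeg D (some w) = 1)


/-- A reticulation cut for `(G, {u,v}, R)`: a pair `(R', E')` with `R' ⊆ R`,
`|R'| = |E'|`, `E'` an edge-cut of the subdivided graph such that each edge of `E'`
is incident to exactly one vertex of `R'`, each vertex of `R'` is incident to
exactly one edge of `E'`, and the root `ρ` is separated from every vertex of `R'`. -/
def IsRetCut {V : Type} (G : SimpleGraph V) (u v : V) (R : Set V)
    (R' : Set V) (E' : Set (Sym2 (Option V))) : Prop :=
  R' ⊆ R ∧ E' ⊆ (subdivide G u v).edgeSet ∧ R'.ncard = E'.ncard ∧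
  ¬ ((subdivide G u v).deleteEdges E').Connected ∧
  (∀ e ∈ E', ∃! r : V, r ∈ R' ∧ (some r : Option V) ∈ e) ∧
  (∀ r ∈ R', ∃! e : Sym2 (Option V), e ∈ E' ∧ (some r : Option V) ∈ e) ∧
  (∀ r ∈ R', ¬ ((subdivide G u v).deleteEdges E').Reachable none (some r))

/-!
Orient `N` and, among the vertices that the cut separates from the root `ρ`, pick one, `w`,
that is minimal for the orientation. Every arc entering `w` then comes from a vertex still
connected to `ρ`, so it is a cut edge. Since `w ≠ ρ`, there is such an arc, and as its tail
is connected to `ρ`, its endpoint in `R'` is `w`. So `w` is a reticulation: it has two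
in-arcs, both cut edges, whereas a vertex of `R'` lies on only one cut edge.
-/

theorem DigraphAcyclic.exists_minimal {W : Type} [Finite W] {D : W → W → Prop}
    (hD : DigraphAcyclic D) {S : Set W} (hS : S.Nonempty) :
    ∃ s ∈ S, ∀ a, D a s → a ∉ S := by
  have : Std.Irrefl (Relation.TransGen D) := ⟨hD⟩
  obtain ⟨s, hs, hmin⟩ :=
    (Finite.wellFounded_of_trans_of_irrefl (Relation.TransGen D)).has_min S hS
  exact ⟨s, hs, fun a ha haS => hmin a haS (Relation.TransGen.single ha)⟩

theorem SimpleGraph.mem_of_reachable_of_not_reachable {W : Type} {G : SimpleGraph W}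
    {E' : Set (Sym2 W)} {r a b : W} (ha : (G.deleteEdges E').Reachable r a)
    (hb : ¬ (G.deleteEdges E').Reachable r b) (hab : G.Adj a b) : s(a, b) ∈ E' := by
  by_contra h
  exact hb (ha.trans (G.deleteEdges_adj.2 ⟨hab, h⟩).reachable)

namespace IsBinOrientation

variable {V : Type} [Fintype V] {G : SimpleGraph V} {u v : V} {R : Set V}
  {D : Option V → Option V → Prop}

theorem exists_pred (hD : IsBinOrientation G u v R D) (w : V) : ∃ a, D a (some w) := by
  have hpos : 0 < inDeg D (some w) := by
    by_cases hw : w ∈ R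
    · rw [(hD.2.2.2 w).1.mp hw]; norm_num
    · rw [(hD.2.2.2 w).2 hw]; norm_num
  obtain ⟨⟨a, ha⟩⟩ := (Nat.card_pos_iff.mp hpos).1
  exact ⟨a, ha⟩

theorem exists_two_preds (hD : IsBinOrientation G u v R D) {w : V} (hw : w ∈ R) :
    ∃ a₁ a₂, a₁ ≠ a₂ ∧ D a₁ (some w) ∧ D a₂ (some w) := by
  obtain ⟨⟨a₁, ha₁⟩, ⟨a₂, ha₂⟩, hne, -⟩ := Nat.card_eq_two_iff.mp ((hD.2.2.2 w).1.mp hw)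
  exact ⟨a₁, a₂, fun h => hne (Subtype.ext h), ha₁, ha₂⟩

end IsBinOrientation

namespace IsRetCut

variable {V : Type} {G : SimpleGraph V} {u v : V} {R R' : Set V} {E' : Set (Sym2 (Option V))}

theorem exists_not_reachable (hcut : IsRetCut G u v R R' E') :
    {x | ¬ ((subdivide G u v).deleteEdges E').Reachable none x}.Nonempty := by
  by_contra! h
  refine hcut.2.2.2.1 (SimpleGraph.connected_iff_exists_forall_reachable _ |>.2 ⟨none, ?_⟩)
  simpa [Set.eq_empty_iff_forall_notMem] using h

theorem mem_of_reachable (hcut : IsRetCut G u v R R' E') {a : Option V} {w : V}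
    (he : s(a, some w) ∈ E') (ha : ((subdivide G u v).deleteEdges E').Reachable none a) :
    w ∈ R' := by
  obtain ⟨r, ⟨hr, hra⟩, -⟩ := hcut.2.2.2.2.1 _ he
  rcases Sym2.mem_iff.mp hra with rfl | h
  · exact absurd ha (hcut.2.2.2.2.2.2 r hr)
  · exact Option.some_injective _ h ▸ hr

theorem eq_of_mem (hcut : IsRetCut G u v R R' E') {a₁ a₂ : Option V} {w : V} (hw : w ∈ R')
    (h₁ : s(a₁, some w) ∈ E') (h₂ : s(a₂, some w) ∈ E') : a₁ = a₂ := by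
  obtain ⟨e, -, he⟩ := hcut.2.2.2.2.2.1 w hw
  exact Sym2.congr_left.mp
    ((he _ ⟨h₁, Sym2.mem_mk_right _ _⟩).trans (he _ ⟨h₂, Sym2.mem_mk_right _ _⟩).symm)

end IsRetCut

theorem no_retcut_of_orientable_general {V : Type} [Fintype V]
    (G : SimpleGraph V)
    (u v : V) (R : Set V)
    (hor : ∃ D : Option V → Option V → Prop, IsBinOrientation G u v R D) :
    ¬ ∃ (R' : Set V) (E' : Set (Sym2 (Option V))), IsRetCut G u v R R' E' := by
  rintro ⟨R', E', hcut⟩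
  obtain ⟨D, hD⟩ := hor
  set H := (subdivide G u v).deleteEdges E'
  obtain ⟨s, hs, hmin⟩ := hD.2.1.exists_minimal hcut.exists_not_reachable
  obtain ⟨w, rfl⟩ : ∃ w, s = some w :=
    Option.ne_none_iff_exists'.mp fun h => hs (h ▸ SimpleGraph.Reachable.refl _)
  have hcross : ∀ a, D a (some w) → s(a, some w) ∈ E' ∧ H.Reachable none a := fun a ha =>
    have hra : H.Reachable none a := not_not.mp (hmin a ha)
    ⟨SimpleGraph.mem_of_reachable_of_not_reachable hra hs (hD.1.1 a _ ha), hra⟩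
  obtain ⟨a, ha⟩ := hD.exists_pred w
  have hwR' : w ∈ R' := hcut.mem_of_reachable (hcross a ha).1 (hcross a ha).2
  obtain ⟨a₁, a₂, hne, ha₁, ha₂⟩ := hD.exists_two_preds (hcut.1 hwR')
  exact hne (hcut.eq_of_mem hwR' (hcross a₁ ha₁).1 (hcross a₂ ha₂).1)

/-- If `(N, e_ρ, R)` is orientable, then `(N, e_ρ, R)` has no reticulation cut. -/
theorem no_retcut_of_orientable {V X : Type} [Fintype V] [DecidableEq V]
    (G : SimpleGraph V) [DecidableRel G.Adj] (hnet : IsUndirBinNet G)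
    (labels : X ≃ {w : V // G.degree w = 1})
    (u v : V) (he : G.Adj u v) (R : Set V)
    (hor : ∃ D : Option V → Option V → Prop, IsBinOrientation G u v R D) :
    ¬ ∃ (R' : Set V) (E' : Set (Sym2 (Option V))), IsRetCut G u v R R' E' :=
  no_retcut_of_orientable_general G u v R hor
end

section
/- Let N = (V,E,X) be an undirected binary phylogenetic network, e_ρ ∈ E, and R ⊆ V with |R| = |E| − |V| + 1. Then (N, e_ρ, R) is orientable if and only if (N, e_ρ, R) has no reticulation cut. -/
open Classical

/-!
An acyclic orientation of a finite graph with prescribed indegrees `d` exists iff `∑ d` is the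
number of edges and every nonempty vertex set `T` contains a vertex `w` with at least `d w`
neighbours outside `T`: a source of `T` is such a vertex, and conversely removing such vertices
one at a time and orienting every edge from the earlier to the later removed endpoint gives the
orientation. For the subdivided network the edge count is the hypothesis on `|R|`. A set `T`
violating the condition avoids the root, and a vertex of `T` with a neighbour outside `T` lies
in `R` and has only one such neighbour; so the edges leaving `T` form a reticulation cut.
Conversely, the vertices that a reticulation cut separates from the root form such a set.
-/

theorem Nat.card_subtype_mono {α : Type*} [Finite α] {p q : α → Prop}
    (h : ∀ x, p x → q x) :
    Nat.card {x // p x} ≤ Nat.card {x // q x} :=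
  Nat.card_le_card_of_injective (fun x => ⟨x.1, h _ x.2⟩) fun _ _ hxy =>
    Subtype.ext (Subtype.mk.inj hxy)

theorem Set.ncard_eq_of_existsUnique {α β : Type*} {s : Set α} {t : Set β}
    {p : α → β → Prop} (hs : ∀ a ∈ s, ∃! b, b ∈ t ∧ p a b) (ht : ∀ b ∈ t, ∃! a, a ∈ s ∧ p a b) :
    s.ncard = t.ncard := by
  choose f hf hf_uniq using hs
  refine Set.ncard_congr f (fun a ha => (hf a ha).1) (fun a a' ha ha' h => ?_) fun b hb => ?_
  · obtain ⟨c, -, hc⟩ := ht (f a ha) (hf a ha).1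
    exact (hc a ⟨ha, (hf a ha).2⟩).trans (hc a' ⟨ha', h ▸ (hf a' ha').2⟩).symm
  · obtain ⟨a, ⟨ha, hab⟩, -⟩ := ht b hb
    exact ⟨a, ha, (hf_uniq a ha b ⟨hb, hab⟩).symm⟩

theorem Sym2.map_some_ne_mk_none {α : Type*} (x : Sym2 α) (y : Option α) :
    Sym2.map some x ≠ s(none, y) := fun h => by
  have := h ▸ Sym2.mem_mk_left none y
  simp [Sym2.mem_map] at this

theorem SimpleGraph.Reachable.notMem_of_forall_adj_mem {W : Type*} {H : SimpleGraph W}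
    {T : Set W} {E : Set (Sym2 W)} (hE : ∀ a ∈ T, ∀ b ∉ T, H.Adj a b → s(a, b) ∈ E)
    {a b : W} (h : (H.deleteEdges E).Reachable a b) (ha : a ∉ T) : b ∉ T := by
  intro hb
  obtain ⟨p⟩ := h
  obtain ⟨d, -, hd₁, hd₂⟩ := p.exists_boundary_dart Tᶜ ha (by simpa using hb)
  have hd := SimpleGraph.deleteEdges_adj.1 d.adj
  exact hd.2 (Sym2.eq_swap ▸ hE _ (by simpa using hd₂) _ hd₁ (H.adj_symm hd.1))

theorem SimpleGraph.mem_of_adj_of_reachable_deleteEdges {W : Type*} {H : SimpleGraph W}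
    {E : Set (Sym2 W)} {a b c : W} (hab : H.Adj a b) (ha : ¬ (H.deleteEdges E).Reachable c a)
    (hb : (H.deleteEdges E).Reachable c b) : s(a, b) ∈ E := by
  by_contra hE
  exact ha (hb.trans
    (SimpleGraph.deleteEdges_adj.2 ⟨H.adj_symm hab, by rwa [Sym2.eq_swap]⟩).reachable)

noncomputable def SimpleGraph.exitDegree {α : Type*} (H : SimpleGraph α) (T : Set α) (w : α) :
    ℕ :=
  Nat.card {y // H.Adj w y ∧ y ∉ T}

def SimpleGraph.Peelable {α : Type*} (H : SimpleGraph α) (d : α → ℕ) : Prop :=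
  ∀ T : Set α, T.Nonempty → ∃ w ∈ T, d w ≤ H.exitDegree T w

section Orientation

variable {W : Type} [Fintype W] {H : SimpleGraph W} {D : W → W → Prop}

theorem IsOrientationOf.sum_inDeg (hD : IsOrientationOf H D) :
    ∑ b, inDeg D b = H.edgeSet.ncard := by
  have arcs_eq_sum : Nat.card {p : W × W // D p.1 p.2} = ∑ b, inDeg D b := by
    let e : {p : W × W // D p.1 p.2} ≃ Σ b, {a // D a b} :=
      { toFun := fun p => ⟨p.1.2, p.1.1, p.2⟩
        invFun := fun q => ⟨(q.2.1, q.1), q.2.2⟩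
        left_inv := fun _ => rfl
        right_inv := fun _ => rfl }
    rw [Nat.card_congr e, Nat.card_sigma]
    rfl
  have arcs_eq_edges : Nat.card {p : W × W // D p.1 p.2} = H.edgeSet.ncard := by
    rw [← Nat.card_coe_set_eq]
    refine Nat.card_eq_of_bijective (fun p => ⟨s(p.1.1, p.1.2), hD.1 _ _ p.2⟩) ⟨?_, ?_⟩
    · rintro ⟨⟨a, b⟩, hab⟩ ⟨⟨c, d⟩, hcd⟩ h
      rcases Sym2.eq_iff.1 (congrArg Subtype.val h) with ⟨rfl, rfl⟩ | ⟨rfl, rfl⟩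
      · rfl
      · exact absurd hcd ((hD.2 _ _ (hD.1 _ _ hab)).1 hab)
    · rintro ⟨e, he⟩
      induction e using Sym2.ind with
      | _ a b =>
        by_cases hab : D a b
        · exact ⟨⟨(a, b), hab⟩, rfl⟩
        · exact ⟨⟨(b, a), (hD.2 b a (H.adj_symm he)).2 hab⟩, Subtype.ext Sym2.eq_swap⟩
  rw [← arcs_eq_sum, arcs_eq_edges]

theorem DigraphAcyclic.exists_source (hD : DigraphAcyclic D) {T : Set W} (hT : T.Nonempty) :
    ∃ z ∈ T, ∀ a ∈ T, ¬ D a z := by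
  have : IsTrans W (Relation.TransGen D) := ⟨fun _ _ _ => Relation.TransGen.trans⟩
  have : Std.Irrefl (Relation.TransGen D) := ⟨hD⟩
  obtain ⟨z, hzT, hmin⟩ :=
    (Finite.wellFounded_of_trans_of_irrefl (Relation.TransGen D)).has_min T hT
  exact ⟨z, hzT, fun a ha hDa => hmin a ha (.single hDa)⟩

theorem IsOrientationOf.peelable_inDeg (hD : IsOrientationOf H D) (hac : DigraphAcyclic D) :
    H.Peelable (inDeg D) := by
  intro T hT
  obtain ⟨z, hzT, hsrc⟩ := hac.exists_source hT
  exact ⟨z, hzT, Nat.card_subtype_mono fun a ha =>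
    ⟨H.adj_symm (hD.1 _ _ ha), fun h => hsrc a h ha⟩⟩

variable {d : W → ℕ}

theorem SimpleGraph.Peelable.exists_rank (hP : H.Peelable d) (T : Finset W) :
    ∃ r : W → ℕ, Set.InjOn r T ∧
      ∀ w ∈ T, d w ≤ Nat.card {y // H.Adj w y ∧ (y ∉ T ∨ r y < r w)} := by
  induction T using Finset.strongInduction with | H T ih => ?_
  rcases T.eq_empty_or_nonempty with rfl | hT
  · exact ⟨fun _ => 0, by simp, by simp⟩
  obtain ⟨w, hwT, hw⟩ := hP T (by exact_mod_cast hT)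
  obtain ⟨r, hr_inj, hr⟩ := ih (T.erase w) (Finset.erase_ssubset hwT)
  refine ⟨fun y => if y = w then 0 else r y + 1, ?_, fun y hy => ?_⟩
  · intro a ha b hb h
    by_cases haw : a = w <;> by_cases hbw : b = w <;>
      simp only [haw, hbw, if_true, if_false] at h
    · exact haw.trans hbw.symm
    · omega
    · omega
    · exact hr_inj (by simp [haw, ha]) (by simp [hbw, hb]) (by omega)
  by_cases hyw : y = w
  · subst hyw
    exact hw.trans (Nat.card_subtype_mono fun z hz => ⟨hz.1, .inl hz.2⟩)
  refine (hr y (Finset.mem_erase.2 ⟨hyw, hy⟩)).trans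
    (Nat.card_subtype_mono fun z hz => ⟨hz.1, ?_⟩)
  rw [Finset.mem_erase] at hz
  by_cases hzw : z = w <;> simp only [hzw, hyw, if_true, if_false] <;> grind

theorem SimpleGraph.Peelable.exists_acyclic_orientation (hP : H.Peelable d)
    (hsum : ∑ w, d w = H.edgeSet.ncard) :
    ∃ D, IsOrientationOf H D ∧ DigraphAcyclic D ∧ ∀ w, inDeg D w = d w := by
  obtain ⟨r, hr_inj, hr⟩ := hP.exists_rank Finset.univ
  let D : W → W → Prop := fun a b => H.Adj a b ∧ r a < r b
  have hD : IsOrientationOf H D := by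
    refine ⟨fun _ _ h => h.1, fun a b hab =>
      ⟨fun h h' => (lt_asymm h.2 h'.2).elim, fun h => ⟨hab, ?_⟩⟩⟩
    have hne : r a ≠ r b := fun h => hab.ne (hr_inj (by simp) (by simp) h)
    have : ¬ r b < r a := fun h' => h ⟨hab.symm, h'⟩
    omega
  have hac : DigraphAcyclic D := fun a h => by
    simpa [Relation.transGen_eq_self] using h.lift r fun _ _ h => h.2
  have hle : ∀ w, d w ≤ inDeg D w := fun w => (hr w (Finset.mem_univ w)).trans
    (Nat.card_subtype_mono fun y hy => ⟨H.adj_symm hy.1, by simpa using hy.2⟩)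
  refine ⟨D, hD, hac, fun w => ?_⟩
  exact ((Finset.sum_eq_sum_iff_of_le fun w _ => hle w).1 (by rw [hsum, hD.sum_inDeg]) w
    (Finset.mem_univ w)).symm

theorem exists_acyclic_orientation_iff :
    (∃ D, IsOrientationOf H D ∧ DigraphAcyclic D ∧ ∀ w, inDeg D w = d w) ↔
      H.Peelable d ∧ ∑ w, d w = H.edgeSet.ncard := by
  refine ⟨fun ⟨D, hD, hac, hdeg⟩ => ?_,
    fun ⟨hP, hsum⟩ => hP.exists_acyclic_orientation hsum⟩
  obtain rfl : d = inDeg D := funext fun w => (hdeg w).symm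
  exact ⟨hD.peelable_inDeg hac, hD.sum_inDeg⟩

end Orientation

section Subdivision

variable {V : Type} {G : SimpleGraph V} {u v : V}

theorem edgeSet_subdivide : (subdivide G u v).edgeSet =
    insert s(none, some u) (insert s(none, some v) (Sym2.map some '' (G.edgeSet \ {s(u, v)}))) := by
  ext e
  induction e using Sym2.ind with | _ a b => ?_
  cases a <;> cases b
  · simp [subdivide, Sym2.map_some_ne_mk_none]
  · simp [subdivide, Sym2.map_some_ne_mk_none]
  · rw [Sym2.eq_swap]; simp [subdivide, Sym2.map_some_ne_mk_none]
  · rw [← Sym2.map_mk, Set.mem_insert_iff, Set.mem_insert_iff,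
      (Sym2.map.injective (Option.some_injective V)).mem_set_image]
    simp [subdivide]

theorem ncard_edgeSet_subdivide [Finite V] (he : G.Adj u v) :
    (subdivide G u v).edgeSet.ncard = G.edgeSet.ncard + 1 := by
  have hu : s(none, some u) ∉
      insert s(none, some v) (Sym2.map some '' (G.edgeSet \ {s(u, v)})) := by
    simp [he.ne, Sym2.map_some_ne_mk_none]
  have hv : s(none, some v) ∉ Sym2.map some '' (G.edgeSet \ {s(u, v)}) := by
    simp [Sym2.map_some_ne_mk_none]
  rw [edgeSet_subdivide, Set.ncard_insert_of_notMem hu, Set.ncard_insert_of_notMem hv,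
    Set.ncard_image_of_injective _ (Sym2.map.injective (Option.some_injective V)),
    ← Set.ncard_sdiff_singleton_add_one (show s(u, v) ∈ G.edgeSet from he)]

theorem reachable_some_subdivide (hG : G.Connected) (a b : V) :
    (subdivide G u v).Reachable (some a) (some b) := by
  obtain ⟨p⟩ := hG.preconnected a b
  induction p with
  | nil => rfl
  | @cons a c b h p ih =>
    refine .trans ?_ ih
    by_cases hs : s(a, c) = s(u, v)
    · have hac : ((a = u ∧ c = v) ∨ (a = v ∧ c = u)) := Sym2.eq_iff.1 hs
      have ha : (subdivide G u v).Adj (some a) none := by simp only [subdivide]; tauto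
      have hc : (subdivide G u v).Adj none (some c) := by simp only [subdivide]; tauto
      exact ha.reachable.trans hc.reachable
    · exact SimpleGraph.Adj.reachable ⟨h, hs⟩

theorem subdivide_connected (hG : G.Connected) : (subdivide G u v).Connected := by
  have hroot : ∀ w, (subdivide G u v).Reachable none w
    | none => .rfl
    | some x => (show (subdivide G u v).Adj none (some u) from .inl rfl).reachable.trans
        (reachable_some_subdivide hG u x)
  exact ⟨fun a b => (hroot a).symm.trans (hroot b)⟩

end Subdivision

section Network

variable {V : Type} {G : SimpleGraph V} {u v : V} {R : Set V}

noncomputable def requiredInDeg (R : Set V) : Option V → ℕ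
  | none => 0
  | some x => if x ∈ R then 2 else 1

theorem sum_requiredInDeg [Fintype V] (R : Set V) :
    ∑ w, requiredInDeg R w = R.ncard + Fintype.card V := by
  simp only [Fintype.sum_option, requiredInDeg, Finset.sum_ite, Finset.sum_const, smul_eq_mul,
    zero_add, Set.ncard_eq_toFinset_card', ← Finset.card_univ,
    ← Finset.card_filter_add_card_filter_not (s := Finset.univ) (· ∈ R),
    Set.filter_mem_univ_eq_toFinset]
  ring

theorem isBinOrientation_iff [Fintype V] {D : Option V → Option V → Prop} :
    IsBinOrientation G u v R D ↔ IsOrientationOf (subdivide G u v) D ∧ DigraphAcyclic D ∧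
      ∀ w, inDeg D w = requiredInDeg R w := by
  have hsome : ∀ x : V,
      ((x ∈ R ↔ inDeg D (some x) = 2) ∧ (x ∉ R → inDeg D (some x) = 1)) ↔
      inDeg D (some x) = requiredInDeg R (some x) := fun x => by
    by_cases hx : x ∈ R <;> simp [requiredInDeg, hx]; omega
  simp only [IsBinOrientation, Option.forall, hsome]
  rfl

theorem mem_and_eq_of_exitDegree_lt_requiredInDeg [Finite V] {H : SimpleGraph (Option V)}
    {T : Set (Option V)} {r : V} {b : Option V}
    (hlt : H.exitDegree T (some r) < requiredInDeg R (some r))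
    (hb : b ∉ T) (hrb : H.Adj (some r) b) :
    r ∈ R ∧ ∀ b', b' ∉ T → H.Adj (some r) b' → b' = b := by
  have hpos : 0 < H.exitDegree T (some r) := @Nat.card_pos _ ⟨⟨b, hrb, hb⟩⟩ _
  have hrR : r ∈ R := by
    by_contra h
    simp only [requiredInDeg, h, if_false] at hlt
    omega
  simp only [requiredInDeg, hrR, if_true] at hlt
  have : Subsingleton {y // H.Adj (some r) y ∧ y ∉ T} :=
    Finite.card_le_one_iff_subsingleton.1 (Nat.lt_succ_iff.1 hlt)
  refine ⟨hrR, fun b' hb' hrb' => ?_⟩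
  exact congrArg Subtype.val
    (Subsingleton.elim (⟨b', hrb', hb'⟩ : {y // H.Adj (some r) y ∧ y ∉ T}) ⟨b, hrb, hb⟩)

theorem exists_isRetCut_of_exitDegree_lt [Finite V] {T : Set (Option V)} (hT : T.Nonempty)
    (hlt : ∀ w ∈ T, (subdivide G u v).exitDegree T w < requiredInDeg R w) :
    ∃ R' E', IsRetCut G u v R R' E' := by
  set H := subdivide G u v
  have hroot : none ∉ T := fun h => Nat.not_lt_zero _ (hlt none h)
  have hret : ∀ r b, some r ∈ T → b ∉ T → H.Adj (some r) b →
      r ∈ R ∧ ∀ b', b' ∉ T → H.Adj (some r) b' → b' = b := fun r b hr =>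
    mem_and_eq_of_exitDegree_lt_requiredInDeg (hlt _ hr)
  let R' : Set V := {r | some r ∈ T ∧ ∃ b ∉ T, H.Adj (some r) b}
  let E' : Set (Sym2 (Option V)) := {e | ∃ a ∈ T, ∃ b ∉ T, H.Adj a b ∧ e = s(a, b)}
  have hend : ∀ a b c, b ∉ T → c ∈ T → c ∈ s(a, b) → c = a := fun a b c hb hc h =>
    (Sym2.mem_iff.1 h).resolve_right fun h => hb (h ▸ hc)
  have hedge : ∀ e ∈ E', ∃! r, r ∈ R' ∧ some r ∈ e := by
    rintro _ ⟨_ | x, ha, b, hb, hab, rfl⟩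
    · exact absurd ha hroot
    exact ⟨x, ⟨⟨ha, b, hb, hab⟩, Sym2.mem_mk_left _ _⟩,
      fun r ⟨hr, hre⟩ => Option.some_injective _ (hend _ _ _ hb hr.1 hre)⟩
  have hvert : ∀ r ∈ R', ∃! e, e ∈ E' ∧ some r ∈ e := by
    rintro r ⟨hr, b, hb, hrb⟩
    refine ⟨s(some r, b), ⟨⟨some r, hr, b, hb, hrb, rfl⟩, Sym2.mem_mk_left _ _⟩, ?_⟩
    rintro _ ⟨⟨a, ha, b', hb', hab', rfl⟩, hre⟩
    obtain rfl := hend _ _ _ hb' hr hre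
    rw [(hret r b hr hb hrb).2 b' hb' hab']
  have hsep : ∀ w, (H.deleteEdges E').Reachable none w → w ∉ T := fun w h =>
    h.notMem_of_forall_adj_mem
      (fun a ha b hb hab => show s(a, b) ∈ E' from ⟨a, ha, b, hb, hab, rfl⟩) hroot
  have hR'R : R' ⊆ R := by
    rintro r ⟨hr, b, hb, hrb⟩
    exact (hret r b hr hb hrb).1
  refine ⟨R', E', hR'R, ?_,
    Set.ncard_eq_of_existsUnique hvert hedge, ?_, hedge, hvert, fun r hr h => hsep _ h hr.1⟩
  · rintro _ ⟨a, -, b, -, hab, rfl⟩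
    exact hab
  · obtain ⟨w, hw⟩ := hT
    exact fun hconn => hsep w (hconn.preconnected none w) hw

theorem exists_exitDegree_lt_of_isRetCut [Finite V] (hG : G.Connected) {R' : Set V}
    {E' : Set (Sym2 (Option V))} (hcut : IsRetCut G u v R R' E') :
    ∃ T : Set (Option V), T.Nonempty ∧
      ∀ w ∈ T, (subdivide G u v).exitDegree T w < requiredInDeg R w := by
  obtain ⟨hR'R, -, hncard, hdisc, hedge, hvert, hsep⟩ := hcut
  set H := subdivide G u v
  obtain ⟨r₀, hr₀⟩ : R'.Nonempty := by
    rw [Set.nonempty_iff_ne_empty]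
    rintro rfl
    rw [Set.ncard_empty, eq_comm, Set.ncard_eq_zero] at hncard
    exact hdisc (by rw [hncard, SimpleGraph.deleteEdges_empty]; exact subdivide_connected hG)
  let T : Set (Option V) := {w | ¬ (H.deleteEdges E').Reachable none w}
  refine ⟨T, ⟨some r₀, hsep r₀ hr₀⟩, ?_⟩
  rintro (_ | x) hx
  · exact absurd .rfl hx
  have hcross : ∀ y, H.Adj (some x) y → y ∉ T → s(some x, y) ∈ E' := fun y hxy hy =>
    SimpleGraph.mem_of_adj_of_reachable_deleteEdges hxy hx (not_not.1 hy)
  by_cases hxR' : x ∈ R'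
  · have : Subsingleton {y // H.Adj (some x) y ∧ y ∉ T} := by
      refine ⟨fun ⟨y₁, hy₁, hy₁T⟩ ⟨y₂, hy₂, hy₂T⟩ =>
        Subtype.ext (Sym2.congr_right (a := some x).1 ?_)⟩
      exact (hvert x hxR').unique ⟨hcross y₁ hy₁ hy₁T, Sym2.mem_mk_left _ _⟩
        ⟨hcross y₂ hy₂ hy₂T, Sym2.mem_mk_left _ _⟩
    have := Finite.card_le_one_iff_subsingleton.2 this
    simp only [requiredInDeg, hR'R hxR', if_true]
    exact Nat.lt_succ_iff.2 this
  · have : IsEmpty {y // H.Adj (some x) y ∧ y ∉ T} := by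
      refine ⟨fun ⟨y, hxy, hy⟩ => ?_⟩
      obtain ⟨r, ⟨hr, hre⟩, -⟩ := hedge _ (hcross y hxy hy)
      rcases Sym2.mem_iff.1 hre with h | rfl
      · exact hxR' (Option.some_injective _ h ▸ hr)
      · exact hy (hsep r hr)
    rw [SimpleGraph.exitDegree, Nat.card_of_isEmpty]
    simp only [requiredInDeg]
    split_ifs <;> omega

theorem peelable_iff_not_exists_isRetCut [Finite V] (hG : G.Connected) :
    (subdivide G u v).Peelable (requiredInDeg R) ↔ ¬ ∃ R' E', IsRetCut G u v R R' E' := by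
  constructor
  · rintro hP ⟨R', E', hcut⟩
    obtain ⟨T, hT, hlt⟩ := exists_exitDegree_lt_of_isRetCut hG hcut
    obtain ⟨w, hw, hle⟩ := hP T hT
    exact (hlt w hw).not_ge hle
  · intro hcut T hT
    by_contra! hlt
    exact hcut (exists_isRetCut_of_exitDegree_lt hT hlt)

end Network

theorem orientable_iff_no_retcut_general {V : Type} [Fintype V]
    (G : SimpleGraph V) [DecidableRel G.Adj] (hnet : IsUndirBinNet G)
    (u v : V) (he : G.Adj u v) (R : Set V)
    (hcard : R.ncard + Fintype.card V = G.edgeSet.ncard + 1) :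
    (∃ D : Option V → Option V → Prop, IsBinOrientation G u v R D) ↔
      ¬ ∃ (R' : Set V) (E' : Set (Sym2 (Option V))), IsRetCut G u v R R' E' := by
  have hsum : ∑ w, requiredInDeg R w = (subdivide G u v).edgeSet.ncard := by
    rw [sum_requiredInDeg, ncard_edgeSet_subdivide he, hcard]
  simp only [isBinOrientation_iff, exists_acyclic_orientation_iff, hsum, and_true]
  exact peelable_iff_not_exists_isRetCut hnet.1

/-- Characterization: with `|R| = |E| − |V| + 1`, the triple `(N, e_ρ, R)` is
orientable iff it has no reticulation cut. -/
theorem orientable_iff_no_retcut {V X : Type} [Fintype V] [DecidableEq V]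
    (G : SimpleGraph V) [DecidableRel G.Adj] (hnet : IsUndirBinNet G)
    (labels : X ≃ {w : V // G.degree w = 1})
    (u v : V) (he : G.Adj u v) (R : Set V)
    (hcard : R.ncard + Fintype.card V = G.edgeSet.ncard + 1) :
    (∃ D : Option V → Option V → Prop, IsBinOrientation G u v R D) ↔
      ¬ ∃ (R' : Set V) (E' : Set (Sym2 (Option V))), IsRetCut G u v R R' E' :=
  orientable_iff_no_retcut_general G hnet u v he R hcard
end

section
/- Let N = (V,E,X) be an undirected phylogenetic network with distinguished edge e_ρ and desired indegrees d⁻ with 1 ≤ d⁻(v) ≤ deg(v). If (N, e_ρ, d⁻) is orientable, then (N, e_ρ, d⁻) has no degree cut. -/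
open Classical

/-- An undirected (not necessarily binary) phylogenetic network: a connected
graph with no degree-2 vertices. -/
def IsUndirNet {V : Type} [Fintype V] (G : SimpleGraph V) [DecidableRel G.Adj] : Prop :=
  G.Connected ∧ ∀ w : V, G.degree w ≠ 2

/-- An orientation of `(N, e_ρ, d⁻)`: an acyclic orientation of the graph obtained
by subdividing the edge `{u,v}` with a root `ρ`, in which `ρ` has indegree `0`
(both its edges are directed outward) and every vertex `w` of `N` has indegree
exactly `d w`. -/
def IsDegOrientation {V : Type} (G : SimpleGraph V) (u v : V) (d : V → ℕ)
    (D : Option V → Option V → Prop) : Prop :=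
  IsOrientationOf (subdivide G u v) D ∧ DigraphAcyclic D ∧ inDeg D none = 0 ∧
    ∀ w : V, inDeg D (some w) = d w

/-- A degree cut for `(G, {u,v}, d)`: a pair `(V', E')` where `E'` is an edge-cut of
the subdivided graph separating the root from every vertex of `V'`, each edge of
`E'` is incident to exactly one element of `V'`, and each `w ∈ V'` is incident to
fewer than `d w` edges of `E'`. -/
def IsDegCut {V : Type} (G : SimpleGraph V) (u v : V) (d : V → ℕ)
    (V' : Set V) (E' : Set (Sym2 (Option V))) : Prop :=
  E' ⊆ (subdivide G u v).edgeSet ∧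
  ¬ ((subdivide G u v).deleteEdges E').Connected ∧
  (∀ w ∈ V', ¬ ((subdivide G u v).deleteEdges E').Reachable none (some w)) ∧
  (∀ e ∈ E', ∃! w : V, w ∈ V' ∧ (some w : Option V) ∈ e) ∧
  (∀ w ∈ V', {e ∈ E' | (some w : Option V) ∈ e}.ncard < d w)

/-!
Remove the cut `E'` and look at the set `A` of vertices no longer reachable from the root `ρ`;
it is nonempty because `E'` disconnects the graph. Acyclicity gives a vertex `w ∈ A` none of
whose in-neighbours lies in `A`, so every arc into `w` crosses the cut. As `d⁻(w) ≥ 1` there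
is such an arc, and its unique endpoint in `V'` cannot be its tail (which is reachable from
`ρ`), so `w ∈ V'`. But then the `d⁻(w)` arcs into `w` are distinct cut edges at `w`,
contradicting the degree bound.
-/

namespace DigraphAcyclic

variable {W : Type} {D : W → W → Prop}

theorem exists_mem_forall_not_mem [Finite W] (hD : DigraphAcyclic D) {S : Set W}
    (hS : S.Nonempty) : ∃ a ∈ S, ∀ b, D b a → b ∉ S := by
  have : IsTrans W (Relation.TransGen D) := ⟨fun _ _ _ => Relation.TransGen.trans⟩
  have : Std.Irrefl (Relation.TransGen D) := ⟨hD⟩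
  obtain ⟨a, haS, hmin⟩ :=
    (Finite.wellFounded_of_trans_of_irrefl (Relation.TransGen D)).has_min S hS
  exact ⟨a, haS, fun b hb hbS => hmin b hbS (.single hb)⟩

end DigraphAcyclic

theorem exists_of_inDeg_pos {W : Type} {D : W → W → Prop} {a : W} (h : 0 < inDeg D a) :
    ∃ b, D b a :=
  let ⟨⟨b, hb⟩⟩ := (Nat.card_pos_iff.mp h).1
  ⟨b, hb⟩

theorem inDeg_le_ncard_of_forall_mem {W : Type} [Finite W] {D : W → W → Prop} {a : W}
    {E' : Set (Sym2 W)} (hE' : ∀ b, D b a → s(b, a) ∈ E') :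
    inDeg D a ≤ {e ∈ E' | a ∈ e}.ncard := by
  rw [← Nat.card_coe_set_eq]
  refine Nat.card_le_card_of_injective
    (fun b => ⟨s(b.1, a), hE' b.1 b.2, Sym2.mem_mk_right _ _⟩) ?_
  rintro ⟨b, hb⟩ ⟨b', hb'⟩ h
  simpa only [Subtype.mk.injEq, Sym2.congr_left] using h

namespace SimpleGraph

variable {W : Type} {H : SimpleGraph W}

theorem exists_not_reachable_of_not_connected (h : ¬ H.Connected) (r : W) :
    ∃ a, ¬ H.Reachable r a := by
  by_contra! hr
  exact h ((connected_iff_exists_forall_reachable H).mpr ⟨r, hr⟩)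

theorem mem_of_reachable_deleteEdges_of_not_reachable {E' : Set (Sym2 W)} {r a b : W}
    (hab : H.Adj b a) (hb : (H.deleteEdges E').Reachable r b)
    (ha : ¬ (H.deleteEdges E').Reachable r a) : s(b, a) ∈ E' := by
  by_contra hE'
  exact ha (hb.trans (Adj.reachable ((deleteEdges_adj ..).mpr ⟨hab, hE'⟩)))

theorem exists_not_reachable_deleteEdges_forall_inArc [Finite W] {D : W → W → Prop}
    (hDH : ∀ a b, D a b → H.Adj a b) (hD : DigraphAcyclic D) {E' : Set (Sym2 W)}
    (hcut : ¬ (H.deleteEdges E').Connected) (r : W) :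
    ∃ a, ¬ (H.deleteEdges E').Reachable r a ∧
      ∀ b, D b a → (H.deleteEdges E').Reachable r b ∧ s(b, a) ∈ E' := by
  obtain ⟨a, ha, hmin⟩ :=
    hD.exists_mem_forall_not_mem (exists_not_reachable_of_not_connected hcut r)
  refine ⟨a, ha, fun b hb => ?_⟩
  have hrb : (H.deleteEdges E').Reachable r b := not_not.mp (hmin b hb)
  exact ⟨hrb, mem_of_reachable_deleteEdges_of_not_reachable (hDH b a hb) hrb ha⟩

end SimpleGraph

theorem no_degcut_of_orientable_general {V : Type} [Fintype V]
    (G : SimpleGraph V) [DecidableRel G.Adj]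
    (u v : V) (d : V → ℕ)
    (hd : ∀ w : V, 1 ≤ d w ∧ d w ≤ G.degree w)
    (hor : ∃ D : Option V → Option V → Prop, IsDegOrientation G u v d D) :
    ¬ ∃ (V' : Set V) (E' : Set (Sym2 (Option V))), IsDegCut G u v d V' E' := by
  rintro ⟨V', E', -, hcut, hsep, huniq, hcard⟩
  obtain ⟨D, ⟨hDG, -⟩, hD, -, hindeg⟩ := hor
  obtain ⟨a, ha, hin⟩ :=
    SimpleGraph.exists_not_reachable_deleteEdges_forall_inArc hDG hD hcut none
  obtain ⟨w, rfl⟩ : ∃ w, a = some w :=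
    Option.ne_none_iff_exists'.mp fun h => ha (h ▸ SimpleGraph.Reachable.refl _)
  obtain ⟨b, hb⟩ := exists_of_inDeg_pos (D := D) (a := some w) (by rw [hindeg]; exact (hd w).1)
  have hwV' : w ∈ V' := by
    obtain ⟨hrb, hbw⟩ := hin b hb
    obtain ⟨x, ⟨hxV', hx⟩, -⟩ := huniq _ hbw
    rcases Sym2.mem_iff.mp hx with rfl | hxw
    · exact absurd hrb (hsep x hxV')
    · rwa [Option.some_injective _ hxw] at hxV'
  have hle := inDeg_le_ncard_of_forall_mem (E' := E') fun b hb => (hin b hb).2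
  have hlt := hcard w hwV'
  rw [hindeg] at hle
  omega

/-- If `(N, e_ρ, d⁻)` is orientable then `(N, e_ρ, d⁻)` has no degree cut. -/
theorem no_degcut_of_orientable {V X : Type} [Fintype V] [DecidableEq V]
    (G : SimpleGraph V) [DecidableRel G.Adj] (hnet : IsUndirNet G)
    (labels : X ≃ {w : V // G.degree w = 1})
    (u v : V) (he : G.Adj u v) (d : V → ℕ)
    (hd : ∀ w : V, 1 ≤ d w ∧ d w ≤ G.degree w)
    (hor : ∃ D : Option V → Option V → Prop, IsDegOrientation G u v d D) :
    ¬ ∃ (V' : Set V) (E' : Set (Sym2 (Option V))), IsDegCut G u v d V' E' :=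
  no_degcut_of_orientable_general G u v d hd hor
end

section
/- Let N = (V,E,X) be an undirected phylogenetic network with distinguished edge e_ρ and desired indegrees d⁻ with 1 ≤ d⁻(v) ≤ deg(v). If (N, e_ρ, d⁻) has no degree cut and ∑_{v∈V} d⁻(v) = |E| + 1, then N − R is a forest, where R is the set of vertices v with d⁻(v) ≥ 2. -/
open Classical

/-!
Give the root `ρ` of `N_ρ` the weight `d⁻(ρ) = 0`. Every nonempty vertex set `S` of `N_ρ` then
contains a vertex `w` with at least `d⁻(w)` neighbours outside `S`: take `w = ρ` if `ρ ∈ S`, and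
otherwise `S` with its edge boundary would be a degree cut. So the vertices can be removed one at a
time, each `w` having at least `d⁻(w)` neighbours among the vertices removed before it, and
counting the edges to these neighbours gives `∑ d⁻ ≤ |E(N_ρ)| = |E| + 1`. A cycle of `N − R`
yields a set `C` of vertices of `N_ρ` of weight at most `1`, each with two neighbours in `C`; the
last vertex of `C` to be removed has two edges to earlier vertices, which makes the inequality
strict.
-/

namespace SimpleGraph

variable {W : Type*} (H : SimpleGraph W)

theorem ncard_biUnion_incidenceSet_eq_diff_add [Finite W] {S : Set W} {w : W} (hw : w ∈ S) :
    (⋃ x ∈ S, H.incidenceSet x).ncard =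
      (⋃ x ∈ S \ {w}, H.incidenceSet x).ncard + (H.neighborSet w \ S).ncard := by
  have hsplit : (⋃ x ∈ S, H.incidenceSet x) =
      (⋃ x ∈ S \ {w}, H.incidenceSet x) ∪ (fun b => s(w, b)) '' (H.neighborSet w \ S) := by
    ext e
    induction e using Sym2.ind with
    | _ a b =>
      simp only [Set.mem_iUnion, Set.mem_union, Set.mem_image, Set.mem_sdiff,
        Set.mem_singleton_iff, mk'_mem_incidenceSet_iff, mem_neighborSet, exists_prop, Sym2.eq_iff]
      grind [H.ne_of_adj, H.adj_symm]
  have hdisj : Disjoint (⋃ x ∈ S \ {w}, H.incidenceSet x)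
      ((fun b => s(w, b)) '' (H.neighborSet w \ S)) := by
    refine Set.disjoint_left.mpr ?_
    rintro _ hmem ⟨b, ⟨-, hb⟩, rfl⟩
    simp only [Set.mem_iUnion, Set.mem_sdiff, Set.mem_singleton_iff, exists_prop,
      mk'_mem_incidenceSet_iff] at hmem
    grind
  rw [hsplit, Set.ncard_union_eq hdisj,
    Set.ncard_image_of_injective _ fun _ _ => Sym2.congr_right.mp]

def edgeBoundary (X : Set W) : Set (Sym2 W) :=
  {e | ∃ a ∈ X, ∃ b ∉ X, H.Adj a b ∧ e = s(a, b)}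

theorem edgeBoundary_subset_edgeSet (X : Set W) : H.edgeBoundary X ⊆ H.edgeSet := by
  rintro _ ⟨a, -, b, -, hab, rfl⟩
  exact hab

theorem not_reachable_deleteEdges_edgeBoundary {X : Set W} {x y : W} (hx : x ∉ X) (hy : y ∈ X) :
    ¬ (H.deleteEdges (H.edgeBoundary X)).Reachable x y := by
  rintro ⟨p⟩
  obtain ⟨dt, -, hfst, hsnd⟩ := p.exists_boundary_dart Xᶜ hx (not_not.mpr hy)
  have hadj := deleteEdges_adj.mp dt.adj
  exact hadj.2 ⟨dt.snd, not_not.mp hsnd, dt.fst, hfst, hadj.1.symm, Sym2.eq_swap⟩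

theorem ncard_edgeBoundary_mem_le [Finite W] {X : Set W} {a : W} (ha : a ∈ X) :
    {e ∈ H.edgeBoundary X | a ∈ e}.ncard ≤ (H.neighborSet a \ X).ncard := by
  have hsub : {e ∈ H.edgeBoundary X | a ∈ e} ⊆ (fun b => s(a, b)) '' (H.neighborSet a \ X) := by
    rintro _ ⟨⟨a', ha', b, hb, hab, rfl⟩, hae⟩
    rcases Sym2.mem_iff.mp hae with rfl | rfl
    · exact ⟨b, ⟨hab, hb⟩, rfl⟩
    · exact absurd ha hb
  calc _ ≤ _ := Set.ncard_le_ncard hsub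
    _ = _ := Set.ncard_image_of_injective _ fun _ _ => Sym2.congr_right.mp

def IsPeelable (f : W → ℕ) : Prop :=
  ∀ S : Finset W, S.Nonempty → ∃ w ∈ S, f w ≤ (H.neighborSet w \ S).ncard

section Peeling

variable {H} [Fintype W] {f : W → ℕ}

theorem IsPeelable.sum_le_ncard_biUnion_incidenceSet (hpeel : H.IsPeelable f) (S : Finset W) :
    ∑ w ∈ S, f w ≤ (⋃ x ∈ (S : Set W), H.incidenceSet x).ncard := by
  induction S using Finset.strongInduction with
  | H S ih =>
    rcases S.eq_empty_or_nonempty with rfl | hS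
    · simp
    obtain ⟨w, hwS, hw⟩ := hpeel S hS
    have hrest := ih _ (Finset.erase_ssubset hwS)
    rw [← Finset.add_sum_erase S f hwS, H.ncard_biUnion_incidenceSet_eq_diff_add hwS,
      ← Finset.coe_erase]
    omega

theorem IsPeelable.sum_lt_ncard_biUnion_incidenceSet (hpeel : H.IsPeelable f) {C : Set W}
    (hC : ∀ c ∈ C, f c < (H.neighborSet c ∩ C).ncard) (S : Finset W) (hSC : ∃ c ∈ S, c ∈ C) :
    ∑ w ∈ S, f w < (⋃ x ∈ (S : Set W), H.incidenceSet x).ncard := by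
  induction S using Finset.strongInduction with
  | H S ih =>
    obtain ⟨w, hwS, hw⟩ := hpeel S (let ⟨c, hc, _⟩ := hSC; ⟨c, hc⟩)
    rw [← Finset.add_sum_erase S f hwS, H.ncard_biUnion_incidenceSet_eq_diff_add hwS,
      ← Finset.coe_erase]
    by_cases hrest : ∃ c ∈ S.erase w, c ∈ C
    · have := ih _ (Finset.erase_ssubset hwS) hrest
      omega
    · push Not at hrest
      have hwC : w ∈ C := by
        obtain ⟨c, hcS, hcC⟩ := hSC
        by_contra hwC
        exact hrest c (Finset.mem_erase.mpr ⟨fun h => hwC (h ▸ hcC), hcS⟩) hcC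
      have hout : H.neighborSet w ∩ C ⊆ H.neighborSet w \ S := fun x ⟨hx, hxC⟩ =>
        ⟨hx, fun hxS => hrest x (Finset.mem_erase.mpr ⟨(H.ne_of_adj hx).symm, hxS⟩) hxC⟩
      have := (hC w hwC).trans_le (Set.ncard_le_ncard hout)
      have := hpeel.sum_le_ncard_biUnion_incidenceSet (S.erase w)
      omega

theorem IsPeelable.sum_lt_ncard_edgeSet (hpeel : H.IsPeelable f) {C : Set W} (hCne : C.Nonempty)
    (hC : ∀ c ∈ C, f c < (H.neighborSet c ∩ C).ncard) :
    ∑ w, f w < H.edgeSet.ncard := by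
  obtain ⟨c, hc⟩ := hCne
  simpa [← H.iUnion_incidenceSet] using
    hpeel.sum_lt_ncard_biUnion_incidenceSet hC Finset.univ ⟨c, Finset.mem_univ c, hc⟩

end Peeling

theorem Walk.IsCycle.two_le_ncard_neighborSet_inter_support {G : SimpleGraph W}
    {a w : W} {p : G.Walk a a} (hp : p.IsCycle) (hw : w ∈ p.support) :
    2 ≤ (G.neighborSet w ∩ {x | x ∈ p.support}).ncard := by
  rw [← hp.ncard_neighborSet_toSubgraph_eq_two hw]
  refine Set.ncard_le_ncard (fun x hx => ⟨p.toSubgraph.adj_sub hx, ?_⟩)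
    (Set.Finite.inter_of_right p.support.finite_toSet _)
  exact p.mem_verts_toSubgraph.mp (p.toSubgraph.edge_vert hx.symm)

end SimpleGraph

open SimpleGraph

section Subdivision

variable {V : Type}

theorem isDegCut_edgeBoundary [Finite V] (G : SimpleGraph V) (u v : V) (d : V → ℕ) {A : Set V}
    (hA : A.Nonempty)
    (hlt : ∀ w ∈ A, ((subdivide G u v).neighborSet (some w) \ some '' A).ncard < d w) :
    IsDegCut G u v d A ((subdivide G u v).edgeBoundary (some '' A)) := by
  have hsep : ∀ w ∈ A, ¬ ((subdivide G u v).deleteEdges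
      ((subdivide G u v).edgeBoundary (some '' A))).Reachable none (some w) := fun w hw =>
    not_reachable_deleteEdges_edgeBoundary _ (by simp) ⟨w, hw, rfl⟩
  refine ⟨edgeBoundary_subset_edgeSet _ _, fun hconn => ?_, hsep, ?_, fun w hw =>
    (ncard_edgeBoundary_mem_le _ (Set.mem_image_of_mem some hw)).trans_lt (hlt w hw)⟩
  · obtain ⟨w, hw⟩ := hA
    exact hsep w hw (hconn.preconnected _ _)
  · rintro _ ⟨_, ⟨w, hw, rfl⟩, b, hb, -, rfl⟩
    refine ⟨w, ⟨hw, Sym2.mem_mk_left _ _⟩, fun w' ⟨hw', hw'e⟩ => ?_⟩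
    rcases Sym2.mem_iff.mp hw'e with h | rfl
    · exact Option.some_injective _ h
    · exact absurd ⟨w', hw', rfl⟩ hb

theorem isPeelable_subdivide [Finite V] (G : SimpleGraph V) (u v : V) (d : V → ℕ)
    (hcut : ¬ ∃ (V' : Set V) (E' : Set (Sym2 (Option V))), IsDegCut G u v d V' E') :
    (subdivide G u v).IsPeelable (fun o => o.elim 0 d) := by
  intro S hS
  by_cases hnone : none ∈ S
  · exact ⟨none, hnone, Nat.zero_le _⟩
  have hSA : (S : Set (Option V)) = some '' {w | some w ∈ S} := by
    ext (_ | w) <;> simp [hnone]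
  by_contra! hlt
  refine hcut ⟨_, _, isDegCut_edgeBoundary G u v d (A := {w | some w ∈ S}) ?_ fun w hw => ?_⟩
  · obtain ⟨_ | w, hw⟩ := hS
    · exact absurd hw hnone
    · exact ⟨w, hw⟩
  · rw [← hSA]
    exact hlt _ hw

theorem edgeSet_subdivide_subset (G : SimpleGraph V) (u v : V) :
    (subdivide G u v).edgeSet ⊆
      Sym2.map some '' (G.edgeSet \ {s(u, v)}) ∪ {s(none, some u), s(none, some v)} := by
  intro e he
  induction e using Sym2.ind with
  | _ a b =>
    rcases a with _ | a <;> rcases b with _ | b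
    · exact he.elim
    · rcases he with rfl | rfl <;> simp
    · rcases he with rfl | rfl <;> simp [Sym2.eq_swap]
    · exact Or.inl ⟨s(a, b), ⟨he.1, he.2⟩, rfl⟩

theorem ncard_edgeSet_subdivide_le [Finite V] (G : SimpleGraph V) {u v : V} (he : G.Adj u v) :
    (subdivide G u v).edgeSet.ncard ≤ G.edgeSet.ncard + 1 := by
  have hrem := Set.ncard_sdiff_singleton_add_one (G.mem_edgeSet.mpr he)
  calc (subdivide G u v).edgeSet.ncard
      ≤ (Sym2.map some '' (G.edgeSet \ {s(u, v)})).ncard +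
          ({s(none, some u), s(none, some v)} : Set (Sym2 (Option V))).ncard :=
        (Set.ncard_le_ncard (edgeSet_subdivide_subset G u v)).trans (Set.ncard_union_le _ _)
    _ ≤ (G.edgeSet \ {s(u, v)}).ncard + 2 :=
        add_le_add Set.ncard_image_le ((Set.ncard_insert_le _ _).trans (by simp))
    _ = G.edgeSet.ncard + 1 := by omega

/-- The vertex set of the subdivision of `G[K]` inside `subdivide G u v`. -/
def subdivideSet (u v : V) (K : Set V) : Set (Option V) :=
  {o | o.elim (u ∈ K ∧ v ∈ K) (· ∈ K)}

theorem two_le_ncard_neighborSet_inter_subdivideSet [Finite V] (G : SimpleGraph V) {u v : V}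
    (he : G.Adj u v) {K : Set V} (hK : ∀ w ∈ K, 2 ≤ (G.neighborSet w ∩ K).ncard) :
    ∀ c ∈ subdivideSet u v K,
      2 ≤ ((subdivide G u v).neighborSet c ∩ subdivideSet u v K).ncard := by
  rintro (_ | w) hc
  · obtain ⟨hu, hv⟩ := hc
    calc 2 = ({some u, some v} : Set (Option V)).ncard :=
          (Set.ncard_pair (Option.some_injective _ |>.ne he.ne)).symm
      _ ≤ _ := Set.ncard_le_ncard <| by
          rintro _ (rfl | rfl)
          exacts [⟨Or.inl rfl, hu⟩, ⟨Or.inr rfl, hv⟩]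
  · -- the edge `uv` of `G` becomes the path `u – none – v`
    refine (hK w hc).trans (Set.ncard_le_ncard_of_injOn
      (fun x => if s(w, x) = s(u, v) then none else some x) ?_ ?_)
    · rintro x ⟨hwx, hx⟩
      by_cases h : s(w, x) = s(u, v)
      · simp only [h, if_true]
        rcases Sym2.eq_iff.mp h with ⟨rfl, rfl⟩ | ⟨rfl, rfl⟩
        · exact ⟨Or.inl rfl, hc, hx⟩
        · exact ⟨Or.inr rfl, hx, hc⟩
      · simp only [h, if_false]
        exact ⟨⟨hwx, h⟩, hx⟩
    · rintro x - y - hxy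
      by_cases hx : s(w, x) = s(u, v) <;> by_cases hy : s(w, y) = s(u, v) <;>
        simp only [hx, hy, if_true, if_false, reduceCtorEq, Option.some.injEq] at hxy
      · exact Sym2.congr_right.mp (hx.trans hy.symm)
      · exact hxy

end Subdivision

theorem forest_of_no_degcut_general {V : Type} [Fintype V]
    (G : SimpleGraph V)
    (u v : V) (he : G.Adj u v) (d : V → ℕ)
    (hcut : ¬ ∃ (V' : Set V) (E' : Set (Sym2 (Option V))), IsDegCut G u v d V' E')
    (hsum : ∑ w : V, d w = G.edgeSet.ncard + 1) :
    (G.induce {w : V | d w < 2}).IsAcyclic := by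
  intro a p hp
  set q := p.map (Embedding.induce {w : V | d w < 2}).toHom
  have hq : q.IsCycle := hp.map (Embedding.induce (G := G) _).injective
  set K : Set V := {x | x ∈ q.support}
  have hKd : ∀ w ∈ K, d w < 2 := by
    intro w hw
    simp only [K, q, Walk.support_map, List.mem_map, Set.mem_ofPred_eq] at hw
    obtain ⟨x, -, rfl⟩ := hw
    exact x.2
  have hcore := two_le_ncard_neighborSet_inter_subdivideSet G he
    fun w hw => hq.two_le_ncard_neighborSet_inter_support hw
  have hweight : ∀ c ∈ subdivideSet u v K, c.elim 0 d < 2 := by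
    rintro (_ | w) hc
    exacts [Nat.zero_lt_two, hKd w hc]
  have hlt := (isPeelable_subdivide G u v d hcut).sum_lt_ncard_edgeSet
    ⟨some a, q.start_mem_support⟩ fun c hc => (hweight c hc).trans_le (hcore c hc)
  have hedges := ncard_edgeSet_subdivide_le G he
  rw [Fintype.sum_option] at hlt
  simp only [Option.elim] at hlt
  omega

/-- If `(N, e_ρ, d⁻)` has no degree cut and `∑ d⁻(v) = |E| + 1`, then `N − R` is a
forest, where `R = {v | d⁻(v) ≥ 2}`. -/
theorem forest_of_no_degcut {V X : Type} [Fintype V] [DecidableEq V]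
    (G : SimpleGraph V) [DecidableRel G.Adj] (hnet : IsUndirNet G)
    (labels : X ≃ {w : V // G.degree w = 1})
    (u v : V) (he : G.Adj u v) (d : V → ℕ)
    (hd : ∀ w : V, 1 ≤ d w ∧ d w ≤ G.degree w)
    (hcut : ¬ ∃ (V' : Set V) (E' : Set (Sym2 (Option V))), IsDegCut G u v d V' E')
    (hsum : ∑ w : V, d w = G.edgeSet.ncard + 1) :
    (G.induce {w : V | d w < 2}).IsAcyclic :=
  forest_of_no_degcut_general G u v he d hcut hsum
end
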